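/- arXiv:2104.10092 — 2 statements merged into one kernel-verified Lean document; each statement's English description precedes it below -/
import Mathlib

section
/- Well-posedness of one step of the semi-explicit Euler scheme: for every step size τ > 0, every u⁰ ∈ V, p⁰ ∈ Q, f ∈ V*, g ∈ Q*, there exists a unique pair (u¹, p¹) ∈ V × Q such that a(u¹, v) − d(v, p⁰) = f(v) for all v ∈ V and d(u¹ − u⁰, q) + c(p¹ − p⁰, q) + τ b(u¹; p¹, q) = τ g(q) for all q ∈ Q. -/
/-!
The system is triangular: the first equation involves only `u¹` (the coupling term uses `p⁰`)
and is a Lax–Milgram problem for `a`, which is bounded by Cauchy–Schwarz for the symmetric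
positive form `a`. Once `u¹` is fixed, the second equation is linear in `p¹` and is a Lax–Milgram
problem for `c + τ b(u¹; ·, ·)`, which is bounded and `τ c_b`-coercive on `Q`.
-/

theorem existsUnique_prod_of_existsUnique {α β : Type*} {P : α → Prop}
    {R : α → β → Prop} (hP : ∃! x, P x) (hR : ∀ x, ∃! y, R x y) :
    ∃! xy : α × β, P xy.1 ∧ R xy.1 xy.2 := by
  obtain ⟨x, hx, hx_uniq⟩ := hP
  obtain ⟨y, hy, hy_uniq⟩ := hR x
  refine ⟨(x, y), ⟨hx, hy⟩, fun ⟨x', y'⟩ ⟨hx', hy'⟩ => ?_⟩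
  obtain rfl : x' = x := hx_uniq x' hx'
  rw [hy_uniq y' hy']

section LaxMilgram

variable {E : Type*} [NormedAddCommGroup E] [InnerProductSpace ℝ E]

theorem isCoercive_of_forall_le {B : E →L[ℝ] E →L[ℝ] ℝ} {μ : ℝ} (hμ : 0 < μ)
    (h : ∀ p, μ * ‖p‖ ^ 2 ≤ B p p) : IsCoercive B :=
  ⟨μ, hμ, fun p => by simpa only [mul_assoc, sq] using h p⟩

theorem IsCoercive.existsUnique_apply_eq [CompleteSpace E] {B : E →L[ℝ] E →L[ℝ] ℝ}
    (hB : IsCoercive B) (F : StrongDual ℝ E) : ∃! p, ∀ q, B p q = F q := by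
  set L := hB.continuousLinearEquivOfBilin
  have hF : ∀ q, inner ℝ ((InnerProductSpace.toDual ℝ E).symm F) q = F q :=
    fun _ => InnerProductSpace.toDual_symm_apply
  refine ⟨L.symm ((InnerProductSpace.toDual ℝ E).symm F), fun q => ?_, fun p hp => ?_⟩
  · rw [← hB.continuousLinearEquivOfBilin_apply, L.apply_symm_apply, hF]
  · rw [L.eq_symm_apply]
    refine ext_inner_right ℝ fun q => ?_
    rw [hB.continuousLinearEquivOfBilin_apply, hp, hF]

end LaxMilgram

theorem LinearMap.norm_apply_le_of_isSymm {V : Type*} [SeminormedAddCommGroup V]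
    [NormedSpace ℝ V] {a : LinearMap.BilinForm ℝ V} (ha : LinearMap.IsSymm a)
    (hnonneg : ∀ u, 0 ≤ a u u) {C : ℝ} (hC : ∀ u, a u u ≤ C * ‖u‖ ^ 2) (u v : V) :
    ‖a u v‖ ≤ |C| * ‖u‖ * ‖v‖ := by
  have hsq : a u v ^ 2 ≤ (C * ‖u‖ * ‖v‖) ^ 2 :=
    calc a u v ^ 2 ≤ a u u * a v v := a.apply_sq_le_of_symm hnonneg ha u v
      _ ≤ (C * ‖u‖ ^ 2) * (C * ‖v‖ ^ 2) :=
        mul_le_mul (hC u) (hC v) (hnonneg v) ((hnonneg u).trans (hC u))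
      _ = (C * ‖u‖ * ‖v‖) ^ 2 := by ring
  simpa [abs_mul] using sq_le_sq.mp hsq

theorem LinearMap.norm_apply_le_of_abs_le_mul_norm_comp {E F E' F' : Type*}
    [SeminormedAddCommGroup E] [NormedSpace ℝ E] [SeminormedAddCommGroup F] [NormedSpace ℝ F]
    [SeminormedAddCommGroup E'] [NormedSpace ℝ E'] [SeminormedAddCommGroup F'] [NormedSpace ℝ F']
    (B : E →ₗ[ℝ] F →ₗ[ℝ] ℝ) (ι : E →L[ℝ] E') (κ : F →L[ℝ] F') {C : ℝ}
    (h : ∀ x y, |B x y| ≤ C * ‖ι x‖ * ‖κ y‖) (x : E) (y : F) :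
    ‖B x y‖ ≤ |C| * ‖ι‖ * ‖κ‖ * ‖x‖ * ‖y‖ :=
  calc ‖B x y‖ ≤ C * ‖ι x‖ * ‖κ y‖ := h x y
    _ ≤ |C| * (‖ι‖ * ‖x‖) * (‖κ‖ * ‖y‖) := by
      gcongr
      · exact le_abs_self C
      · exact ι.le_opNorm x
      · exact κ.le_opNorm y
    _ = |C| * ‖ι‖ * ‖κ‖ * ‖x‖ * ‖y‖ := by ring

theorem semi_explicit_euler_step_wellposed_general
    {V Q HQ : Type*}
    [NormedAddCommGroup V] [InnerProductSpace ℝ V] [CompleteSpace V]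
    [NormedAddCommGroup Q] [InnerProductSpace ℝ Q] [CompleteSpace Q]
    [NormedAddCommGroup HQ] [InnerProductSpace ℝ HQ]
    (ιQ : Q →L[ℝ] HQ)
    (c_a C_a c_c C_c C_d L_b c_b : ℝ)
    (hca : 0 < c_a) (hcc : 0 < c_c) (hcb : 0 < c_b)
    (a : V →ₗ[ℝ] V →ₗ[ℝ] ℝ) (ha_symm : ∀ u v : V, a u v = a v u)
    (ha_lower : ∀ u : V, c_a * ‖u‖ ^ 2 ≤ a u u)
    (ha_upper : ∀ u : V, a u u ≤ C_a ^ 2 * ‖u‖ ^ 2)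
    (c : Q →ₗ[ℝ] Q →ₗ[ℝ] ℝ)
    (hc_lower : ∀ p : Q, c_c * ‖ιQ p‖ ^ 2 ≤ c p p)
    (hc_bound : ∀ p q : Q, |c p q| ≤ C_c * ‖ιQ p‖ * ‖ιQ q‖)
    (d : V →ₗ[ℝ] Q →ₗ[ℝ] ℝ)
    (hd_bound : ∀ (u : V) (p : Q), |d u p| ≤ C_d * ‖u‖ * ‖ιQ p‖)
    (b : V → Q →ₗ[ℝ] Q →ₗ[ℝ] ℝ)
    (hb_lipp : ∀ (u : V) (p₁ p₂ q : Q), |b u p₁ q - b u p₂ q| ≤ L_b * ‖p₁ - p₂‖ * ‖q‖)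
    (hb_coer : ∀ (u : V) (p : Q), c_b * ‖p‖ ^ 2 ≤ b u p p)
    (τ : ℝ) (hτ : 0 < τ)
    (u0 : V) (p0 : Q) (f : V →L[ℝ] ℝ) (g : Q →L[ℝ] ℝ) :
    ∃! up : V × Q,
      (∀ v : V, a up.1 v - d v p0 = f v) ∧
      (∀ q : Q, d (up.1 - u0) q + c (up.2 - p0) q + τ * b up.1 up.2 q = τ * g q) := by
  let a' := a.mkContinuous₂ _ <| a.norm_apply_le_of_isSymm ⟨ha_symm⟩
    (fun u => (by positivity : 0 ≤ c_a * ‖u‖ ^ 2).trans (ha_lower u)) ha_upper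
  let d' := d.mkContinuous₂ _ <|
    d.norm_apply_le_of_abs_le_mul_norm_comp (.id ℝ V) ιQ (by simpa using hd_bound)
  let c' := c.mkContinuous₂ _ <| c.norm_apply_le_of_abs_le_mul_norm_comp ιQ ιQ hc_bound
  let b' u := (b u).mkContinuous₂ L_b fun p q => by simpa using hb_lipp u p 0 q
  have first_stage : ∃! u : V, ∀ v, a u v - d v p0 = f v := by
    refine (existsUnique_congr fun u => forall_congr' fun v => ?_).mpr <|
      (isCoercive_of_forall_le hca ha_lower).existsUnique_apply_eq (B := a') (f + d'.flip p0)
    simp [a', d', sub_eq_iff_eq_add]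
  have second_stage : ∀ u : V, ∃! p : Q,
      ∀ q, d (u - u0) q + c (p - p0) q + τ * b u p q = τ * g q := by
    intro u
    have coercive : IsCoercive (c' + τ • b' u) :=
      isCoercive_of_forall_le (mul_pos hτ hcb) fun p => by
        have hc_nonneg : 0 ≤ c p p := (by positivity : 0 ≤ c_c * ‖ιQ p‖ ^ 2).trans (hc_lower p)
        simp only [add_apply, smul_apply, LinearMap.mkContinuous₂_apply, smul_eq_mul, c', b']
        linarith [mul_le_mul_of_nonneg_left (hb_coer u p) hτ.le]
    refine (existsUnique_congr fun p => forall_congr' fun q => ?_).mpr <|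
      coercive.existsUnique_apply_eq (τ • g + c' p0 - d' (u - u0))
    simp only [map_sub, LinearMap.sub_apply, add_apply, sub_apply, smul_apply,
      LinearMap.mkContinuous₂_apply, smul_eq_mul, c', b', d']
    constructor <;> intro h <;> linarith
  exact existsUnique_prod_of_existsUnique first_stage second_stage

/-- Well-posedness of one step of the semi-explicit Euler scheme. -/
theorem semi_explicit_euler_step_wellposed
    {V Q HV HQ : Type*}
    [NormedAddCommGroup V] [InnerProductSpace ℝ V] [CompleteSpace V]
    [NormedAddCommGroup Q] [InnerProductSpace ℝ Q] [CompleteSpace Q]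
    [NormedAddCommGroup HV] [InnerProductSpace ℝ HV] [CompleteSpace HV]
    [NormedAddCommGroup HQ] [InnerProductSpace ℝ HQ] [CompleteSpace HQ]
    (ιV : V →L[ℝ] HV) (hιV : Function.Injective ιV)
    (ιQ : Q →L[ℝ] HQ) (hιQ : Function.Injective ιQ)
    (c_a C_a c_c C_c C_d L_b c_b : ℝ)
    (hca : 0 < c_a) (hCa : 0 < C_a) (hcc : 0 < c_c) (hCc : 0 < C_c)
    (hLb : 0 < L_b) (hcb : 0 < c_b)
    (a : V →ₗ[ℝ] V →ₗ[ℝ] ℝ) (ha_symm : ∀ u v : V, a u v = a v u)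
    (ha_lower : ∀ u : V, c_a * ‖u‖ ^ 2 ≤ a u u)
    (ha_upper : ∀ u : V, a u u ≤ C_a ^ 2 * ‖u‖ ^ 2)
    (c : Q →ₗ[ℝ] Q →ₗ[ℝ] ℝ) (hc_symm : ∀ p q : Q, c p q = c q p)
    (hc_lower : ∀ p : Q, c_c * ‖ιQ p‖ ^ 2 ≤ c p p)
    (hc_bound : ∀ p q : Q, |c p q| ≤ C_c * ‖ιQ p‖ * ‖ιQ q‖)
    (d : V →ₗ[ℝ] Q →ₗ[ℝ] ℝ)
    (hd_bound : ∀ (u : V) (p : Q), |d u p| ≤ C_d * ‖u‖ * ‖ιQ p‖)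
    (b : V → Q →ₗ[ℝ] Q →ₗ[ℝ] ℝ)
    (hb_lipp : ∀ (u : V) (p₁ p₂ q : Q), |b u p₁ q - b u p₂ q| ≤ L_b * ‖p₁ - p₂‖ * ‖q‖)
    (hb_coer : ∀ (u : V) (p : Q), c_b * ‖p‖ ^ 2 ≤ b u p p)
    (τ : ℝ) (hτ : 0 < τ)
    (u0 : V) (p0 : Q) (f : V →L[ℝ] ℝ) (g : Q →L[ℝ] ℝ) :
    ∃! up : V × Q,
      (∀ v : V, a up.1 v - d v p0 = f v) ∧
      (∀ q : Q, d (up.1 - u0) q + c (up.2 - p0) q + τ * b up.1 up.2 q = τ * g q) :=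
  semi_explicit_euler_step_wellposed_general ιQ c_a C_a c_c C_c C_d L_b c_b hca hcc hcb a ha_symm
    ha_lower ha_upper c hc_lower hc_bound d hd_bound b hb_lipp hb_coer τ hτ u0 p0 f g
end

section
/- Boundedness and coercivity of the reduced pressure form: for every p ∈ Q there exists a unique w_p ∈ V with a(w_p, v) = d(v, p) for all v ∈ V, and the bilinear form m : Q × Q → ℝ defined by m(p, q) := c(p, q) + d(w_p, q) is symmetric, satisfies m(p, p) ≥ c_c ‖p‖_{H_Q}² for all p ∈ Q, and satisfies |m(p, q)| ≤ (C_c + C_d²/c_a) ‖p‖_{H_Q} ‖q‖_{H_Q} for all p, q ∈ Q. -/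
open InnerProductSpace RealInnerProductSpace

section aux

variable {V : Type*} [NormedAddCommGroup V] [InnerProductSpace ℝ V] [CompleteSpace V]

/-- Cauchy–Schwarz for a nonnegative symmetric bilinear form. -/
lemma aux_cs (a : V →ₗ[ℝ] V →ₗ[ℝ] ℝ) (ha_symm : ∀ u v : V, a u v = a v u)
    (ha_nonneg : ∀ u : V, 0 ≤ a u u) (u v : V) :
    (a u v) ^ 2 ≤ a u u * a v v := by
  have h : ∀ t : ℝ, 0 ≤ a v v * (t * t) + (2 * a u v) * t + a u u := by
    intro t
    have := ha_nonneg (u + t • v)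
    simp only [map_add, map_smul, LinearMap.add_apply, LinearMap.smul_apply,
      smul_eq_mul] at this
    rw [ha_symm v u] at this
    ring_nf at this ⊢
    linarith
  have hdisc := discrim_le_zero h
  rw [discrim] at hdisc
  nlinarith

end aux

/-- Boundedness and coercivity of the reduced pressure form. -/
theorem reduced_pressure_form_bounded_coercive
    {V Q HQ : Type*}
    [NormedAddCommGroup V] [InnerProductSpace ℝ V] [CompleteSpace V]
    [NormedAddCommGroup Q] [InnerProductSpace ℝ Q] [CompleteSpace Q]
    [NormedAddCommGroup HQ] [InnerProductSpace ℝ HQ] [CompleteSpace HQ]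
    (ιQ : Q →L[ℝ] HQ) (hιQ : Function.Injective ιQ)
    (c_a C_a c_c C_c C_d : ℝ)
    (hca : 0 < c_a) (hCa : 0 < C_a) (hcc : 0 < c_c) (hCc : 0 < C_c)
    (a : V →ₗ[ℝ] V →ₗ[ℝ] ℝ) (ha_symm : ∀ u v : V, a u v = a v u)
    (ha_lower : ∀ u : V, c_a * ‖u‖ ^ 2 ≤ a u u)
    (ha_upper : ∀ u : V, a u u ≤ C_a ^ 2 * ‖u‖ ^ 2)
    (c : Q →ₗ[ℝ] Q →ₗ[ℝ] ℝ) (hc_symm : ∀ p q : Q, c p q = c q p)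
    (hc_lower : ∀ p : Q, c_c * ‖ιQ p‖ ^ 2 ≤ c p p)
    (hc_bound : ∀ p q : Q, |c p q| ≤ C_c * ‖ιQ p‖ * ‖ιQ q‖)
    (d : V →ₗ[ℝ] Q →ₗ[ℝ] ℝ)
    (hd_bound : ∀ (u : V) (p : Q), |d u p| ≤ C_d * ‖u‖ * ‖ιQ p‖) :
    (∀ p : Q, ∃! w : V, ∀ v : V, a w v = d v p) ∧
    ∀ w : Q → V, (∀ (p : Q) (v : V), a (w p) v = d v p) →
      (∀ p q : Q, c p q + d (w p) q = c q p + d (w q) p) ∧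
      (∀ p : Q, c_c * ‖ιQ p‖ ^ 2 ≤ c p p + d (w p) p) ∧
      (∀ p q : Q, |c p q + d (w p) q| ≤ (C_c + C_d ^ 2 / c_a) * ‖ιQ p‖ * ‖ιQ q‖) := by
  have ha_nonneg : ∀ u : V, 0 ≤ a u u := fun u =>
    le_trans (by positivity) (ha_lower u)
  -- boundedness of a
  have ha_bound : ∀ u v : V, |a u v| ≤ C_a ^ 2 * ‖u‖ * ‖v‖ := by
    intro u v
    have hcs := aux_cs a ha_symm ha_nonneg u v
    have h1 := ha_upper u
    have h2 := ha_upper v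
    have hsq : (a u v) ^ 2 ≤ (C_a ^ 2 * ‖u‖ * ‖v‖) ^ 2 := by
      nlinarith [ha_nonneg u, ha_nonneg v, norm_nonneg u, norm_nonneg v,
        mul_nonneg (norm_nonneg u) (norm_nonneg v)]
    have hnn : (0:ℝ) ≤ C_a ^ 2 * ‖u‖ * ‖v‖ := by positivity
    nlinarith [abs_nonneg (a u v), sq_abs (a u v)]
  -- uniqueness helper
  have huniq : ∀ w w' : V, (∀ v : V, a w v = a w' v) → w = w' := by
    intro w w' h
    have h0 : a (w - w') (w - w') = 0 := by
      simp only [map_sub, LinearMap.sub_apply]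
      linarith [h w, h w', ha_symm w w']
    have hl := ha_lower (w - w')
    rw [h0] at hl
    have hsq : ‖w - w'‖ ^ 2 ≤ 0 := by nlinarith
    have hnorm : w - w' = 0 := norm_eq_zero.mp
      (pow_eq_zero_iff (by norm_num : (2:ℕ) ≠ 0) |>.mp (le_antisymm hsq (sq_nonneg _)))
    exact sub_eq_zero.mp hnorm
  -- continuous bilinear version of a
  let A : V →L[ℝ] V →L[ℝ] ℝ :=
    LinearMap.mkContinuous₂ a (C_a ^ 2) (by
      intro u v
      simpa [Real.norm_eq_abs] using ha_bound u v)
  have hA : ∀ u v : V, A u v = a u v := fun u v => rfl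
  have hAcoer : IsCoercive A := by
    refine ⟨c_a, hca, fun u => ?_⟩
    have := ha_lower u
    rw [hA]
    nlinarith [norm_nonneg u]
  -- existence of w p
  have hexist : ∀ p : Q, ∃ w : V, ∀ v : V, a w v = d v p := by
    intro p
    -- the functional v ↦ d v p
    let f : V →L[ℝ] ℝ :=
      LinearMap.mkContinuous (d.flip p) (C_d * ‖ιQ p‖) (by
        intro v
        have := hd_bound v p
        rw [Real.norm_eq_abs]
        calc |d v p| ≤ C_d * ‖v‖ * ‖ιQ p‖ := this
          _ = C_d * ‖ιQ p‖ * ‖v‖ := by ring)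
    let y : V := (InnerProductSpace.toDual ℝ V).symm f
    refine ⟨hAcoer.continuousLinearEquivOfBilin.symm y, fun v => ?_⟩
    have h1 : ⟪hAcoer.continuousLinearEquivOfBilin
        (hAcoer.continuousLinearEquivOfBilin.symm y), v⟫_ℝ
        = A (hAcoer.continuousLinearEquivOfBilin.symm y) v :=
      hAcoer.continuousLinearEquivOfBilin_apply _ v
    rw [hAcoer.continuousLinearEquivOfBilin.apply_symm_apply] at h1
    have h2 : ⟪y, v⟫_ℝ = f v := InnerProductSpace.toDual_symm_apply
    have h3 : f v = d v p := rfl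
    rw [← hA, ← h1, h2, h3]
  -- key bound on d (w p) q for any solution w p
  have hkey : ∀ (p : Q) (wp : V), (∀ v : V, a wp v = d v p) →
      ∀ q : Q, |d wp q| ≤ C_d ^ 2 / c_a * ‖ιQ p‖ * ‖ιQ q‖ := by
    intro p wp hwp q
    have h1 : c_a * ‖wp‖ ^ 2 ≤ d wp p := by rw [← hwp wp]; exact ha_lower wp
    have h2 : d wp p ≤ C_d * ‖wp‖ * ‖ιQ p‖ := le_trans (le_abs_self _) (hd_bound wp p)
    have h3 : |d wp q| ≤ C_d * ‖wp‖ * ‖ιQ q‖ := hd_bound wp q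
    have hwp0 : wp = 0 → |d wp q| ≤ C_d ^ 2 / c_a * ‖ιQ p‖ * ‖ιQ q‖ := by
      intro h0
      subst h0
      simp only [map_zero, LinearMap.zero_apply, abs_zero]
      positivity
    rcases le_or_gt C_d 0 with hCd | hCd
    · have hs2 : ‖wp‖ ^ 2 ≤ 0 := by
        nlinarith [mul_nonneg (norm_nonneg wp) (norm_nonneg (ιQ p))]
      exact hwp0 (norm_eq_zero.mp
        (pow_eq_zero_iff (by norm_num : (2:ℕ) ≠ 0) |>.mp (le_antisymm hs2 (sq_nonneg _))))
    · rcases eq_or_lt_of_le (norm_nonneg wp) with h0 | h0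
      · exact hwp0 (norm_eq_zero.mp h0.symm)
      · have h4 : c_a * ‖wp‖ ≤ C_d * ‖ιQ p‖ := by nlinarith
        have h5 : C_d * ‖wp‖ * ‖ιQ q‖ ≤ C_d ^ 2 / c_a * ‖ιQ p‖ * ‖ιQ q‖ := by
          rw [div_mul_eq_mul_div, div_mul_eq_mul_div, le_div_iff₀ hca]
          nlinarith [mul_nonneg (mul_nonneg hCd.le (norm_nonneg (ιQ q)))
            (sub_nonneg.mpr h4)]
        exact h3.trans h5
  refine ⟨fun p => ?_, fun w hw => ?_⟩
  · obtain ⟨wp, hwp⟩ := hexist p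
    exact ⟨wp, hwp, fun w' hw' => huniq w' wp (fun v => (hw' v).trans (hwp v).symm)⟩
  · refine ⟨fun p q => ?_, fun p => ?_, fun p q => ?_⟩
    · have h1 : d (w p) q = a (w q) (w p) := (hw q (w p)).symm
      have h2 : d (w q) p = a (w p) (w q) := (hw p (w q)).symm
      rw [h1, h2, hc_symm p q, ha_symm]
    · have h1 : d (w p) p = a (w p) (w p) := (hw p (w p)).symm
      rw [h1]
      linarith [ha_nonneg (w p), hc_lower p]
    · have h1 := hc_bound p q
      have h4 := hkey p (w p) (hw p) q
      calc |c p q + d (w p) q| ≤ |c p q| + |d (w p) q| := abs_add_le _ _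
        _ ≤ C_c * ‖ιQ p‖ * ‖ιQ q‖ + C_d ^ 2 / c_a * ‖ιQ p‖ * ‖ιQ q‖ := by linarith
        _ = (C_c + C_d ^ 2 / c_a) * ‖ιQ p‖ * ‖ιQ q‖ := by ring
end
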